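/- For every class 𝓗 of topological spaces and every family 𝐅 = {𝓕_a : a ∈ A} of filter-families (each 𝓕_a a family of filters on a set I_a), one has (𝐅c : 𝓗) = 𝐐c, where 𝐐 = {𝓕_a ∩ 𝓖 : a ∈ A, 𝓖 ∈ Spec_{I_a}(𝓗)}. In particular every member of 𝐐 is contained in some member of 𝐅, and hence if every 𝓕_a consists of ultrafilters then every member of 𝐐 consists of ultrafilters. -/

import Mathlib

universe u

open Filter Topology

/-- A space `X` is sequencewise `𝓕`-compact if every `I`-indexed sequence in `X`
`F`-converges (to some point) for some `F ∈ 𝓕`. -/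
def SeqFCompact {I : Type u} (𝓕 : Set (Filter I)) (X : Type u) [TopologicalSpace X] : Prop :=
  ∀ x : I → X, ∃ F ∈ 𝓕, ∃ p : X, Filter.Tendsto x F (𝓝 p)

/-- The spectrum of a sequence `y : I → Y`: the set of filters on `I` along which `y`
converges to some point of `Y`. -/
def spec {I : Type u} {Y : Type u} [TopologicalSpace Y] (y : I → Y) : Set (Filter I) :=
  {F | ∃ p : Y, Filter.Tendsto y F (𝓝 p)}

/-- The spectrum of a class `H` of topological spaces, relative to the index set `I`. -/
def specI (I : Type u) (H : ∀ Y : Type u, TopologicalSpace Y → Prop) : Set (Set (Filter I)) :=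
  {𝓖 | ∃ (Y : Type u) (tY : TopologicalSpace Y) (y : I → Y), H Y tY ∧ 𝓖 = @spec I Y tY y}

/-!
A sequence `z = (x, y)` in `X × Y` converges along `F` exactly when `x` and `y` both do, so
`spec z = spec x ∩ spec y`. Hence `X × Y` is sequencewise `𝓕`-compact iff for every `y : I → Y`
the space `X` is sequencewise `𝓕 ∩ spec y`-compact, and quantifying over `Y ∈ 𝓗` gives the
theorem.
-/

section

variable {I X Y : Type u} [TopologicalSpace X] [TopologicalSpace Y]

theorem seqFCompact_iff_forall_inter_spec_nonempty (𝓕 : Set (Filter I)) :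
    SeqFCompact 𝓕 X ↔ ∀ x : I → X, (𝓕 ∩ spec x).Nonempty := by
  simp only [SeqFCompact, spec, Set.Nonempty, Set.mem_inter_iff, Set.mem_ofPred_eq]

theorem spec_prod (z : I → X × Y) :
    spec z = spec (fun i => (z i).1) ∩ spec (fun i => (z i).2) := by
  ext F
  simp only [spec, Set.mem_inter_iff, Set.mem_ofPred_eq, Prod.exists, nhds_prod_eq,
    tendsto_prod_iff', exists_and_left, exists_and_right]

theorem seqFCompact_prod_iff (𝓕 : Set (Filter I)) :
    SeqFCompact 𝓕 (X × Y) ↔ ∀ y : I → Y, SeqFCompact (𝓕 ∩ spec y) X := by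
  simp only [seqFCompact_iff_forall_inter_spec_nonempty, spec_prod, ← Set.inter_assoc]
  constructor
  · intro h y x
    simpa only [Set.inter_right_comm 𝓕] using h fun i => (x i, y i)
  · intro h z
    simpa only [Set.inter_right_comm 𝓕] using h (fun i => (z i).2) fun i => (z i).1

end

/-- `(𝐅c : 𝓗) = 𝐐c` where `𝐐 = {𝓕_a ∩ 𝓖 : a ∈ A, 𝓖 ∈ Spec_{I_a}(𝓗)}`; moreover every
member of `𝐐` is contained in some member of `𝐅`, and hence if every `𝓕_a` consists of
ultrafilters then every member of `𝐐` consists of ultrafilters. -/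
theorem frolik_FCompact_eq_Qc {A : Type u} (I : A → Type u)
    (𝓕 : ∀ a : A, Set (Filter (I a)))
    (H : ∀ Y : Type u, TopologicalSpace Y → Prop) :
    (∀ (X : Type u) [TopologicalSpace X],
      (∀ (Y : Type u) (tY : TopologicalSpace Y), H Y tY →
          (∀ a : A, SeqFCompact (𝓕 a) (X × Y))) ↔
        (∀ a : A, ∀ 𝓖 ∈ specI (I a) H, SeqFCompact (𝓕 a ∩ 𝓖) X)) ∧
    (∀ a : A, ∀ 𝓖 ∈ specI (I a) H, 𝓕 a ∩ 𝓖 ⊆ 𝓕 a) ∧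
    ((∀ a : A, ∀ F ∈ 𝓕 a, ∃ U : Ultrafilter (I a), F = ↑U) →
      ∀ a : A, ∀ 𝓖 ∈ specI (I a) H, ∀ F ∈ 𝓕 a ∩ 𝓖, ∃ U : Ultrafilter (I a), F = ↑U) := by
  refine ⟨fun X _ => ?_, fun a 𝓖 _ => Set.inter_subset_left, fun hU a 𝓖 _ F hF => hU a F hF.1⟩
  simp only [seqFCompact_prod_iff, specI, Set.mem_ofPred_eq]
  constructor
  · rintro h a _ ⟨Y, tY, y, hY, rfl⟩
    exact h Y tY hY a y
  · exact fun h Y tY hY a y => h a _ ⟨Y, tY, y, hY, rfl⟩
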